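/- arXiv:2408.02086 — 7 statements merged into one kernel-verified Lean document; each statement's English description precedes it below -/
import Mathlib

section
/- Let n ≥ 2 and let c ∈ ℝ^n satisfy c_i > 0 for all i, and suppose that for the index i* attaining the maximum of c one has c_{i*} < Σ_{j ≠ i*} c_j. Then the vector (1/2, 1/2, …, 1/2) is the unique maximizer of ⟨c, x⟩ over the polytope P = { x ∈ [0,1]^n : x_i + x_j ≤ 1 for all i ≠ j }. -/
/-- For the edge LP relaxation of MWIS on a complete graph with
positive costs such that the maximal cost is less than the sum of the remaining
costs, the all-(1/2) vector is the unique maximizer. -/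
theorem stmt_0 (n : ℕ) (hn : 2 ≤ n) (c : Fin n → ℝ)
    (hpos : ∀ i, 0 < c i)
    (hmax : ∀ istar : Fin n, (∀ j, c j ≤ c istar) →
      c istar < ∑ j ∈ Finset.univ.erase istar, c j)
    (P : Set (Fin n → ℝ))
    (hP : P = {x | (∀ i, 0 ≤ x i ∧ x i ≤ 1) ∧ ∀ i j, i ≠ j → x i + x j ≤ 1}) :
    (fun _ : Fin n => (1 / 2 : ℝ)) ∈ P ∧
    ∀ x ∈ P, x ≠ (fun _ : Fin n => (1 / 2 : ℝ)) →
      ∑ i, c i * x i < ∑ i, c i * (1 / 2 : ℝ) := by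
  subst hP
  have hn0 : 0 < n := by omega
  haveI : NeZero n := ⟨by omega⟩
  set S : ℝ := ∑ i, c i with hS
  -- every cost satisfies 2 * c i < S
  have hkey : ∀ i : Fin n, 2 * c i < S := by
    obtain ⟨istar, -, hstar⟩ := Finset.exists_max_image Finset.univ c
      ⟨⟨0, hn0⟩, Finset.mem_univ _⟩
    have h1 : c istar < ∑ j ∈ Finset.univ.erase istar, c j :=
      hmax istar (fun j => hstar j (Finset.mem_univ j))
    have h2 : ∑ j ∈ Finset.univ.erase istar, c j = S - c istar := by
      rw [hS, Finset.sum_erase_eq_sub (Finset.mem_univ istar)]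
    intro i
    have := hstar i (Finset.mem_univ i)
    linarith [h1, h2 ▸ h1]
  have hrhs : ∑ i, c i * (1 / 2 : ℝ) = S / 2 := by
    rw [← Finset.sum_mul]; ring
  constructor
  · exact ⟨fun i => ⟨by norm_num, by norm_num⟩, fun i j _ => by norm_num⟩
  · rintro x ⟨hbox, hedge⟩ hne
    rw [hrhs]
    by_cases hcase : ∃ i0, 1 / 2 < x i0
    · obtain ⟨i0, hi0⟩ := hcase
      have hsplit : ∑ i, c i * x i
          = c i0 * x i0 + ∑ j ∈ Finset.univ.erase i0, c j * x j := by
        rw [← Finset.add_sum_erase _ _ (Finset.mem_univ i0)]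
      have hle : ∑ j ∈ Finset.univ.erase i0, c j * x j
          ≤ (S - c i0) * (1 - x i0) := by
        have : ∑ j ∈ Finset.univ.erase i0, c j * x j
            ≤ ∑ j ∈ Finset.univ.erase i0, c j * (1 - x i0) := by
          apply Finset.sum_le_sum
          intro j hj
          have hji : j ≠ i0 := Finset.ne_of_mem_erase hj
          have := hedge j i0 hji
          have := (hpos j).le
          nlinarith
        calc _ ≤ _ := this
          _ = (S - c i0) * (1 - x i0) := by
              rw [← Finset.sum_mul, Finset.sum_erase_eq_sub (Finset.mem_univ i0)]
      have hx1 : x i0 ≤ 1 := (hbox i0).2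
      have h2c : 2 * c i0 < S := hkey i0
      rw [hsplit]
      nlinarith
    · push_neg at hcase
      have hne' : ∃ k, x k ≠ (1 / 2 : ℝ) := by
        by_contra h
        push_neg at h
        exact hne (funext h)
      obtain ⟨k, hk⟩ := hne'
      rw [← hrhs]
      apply Finset.sum_lt_sum
      · intro i _
        exact mul_le_mul_of_nonneg_left (hcase i) (hpos i).le
      · exact ⟨k, Finset.mem_univ k,
          mul_lt_mul_of_pos_left (lt_of_le_of_ne (hcase k) hk) (hpos k)⟩
end

section
/- In the clique cover instance setting, let λ ∈ ℝ^m and let x* ∈ [0,1]^{n+m} satisfy: x*_i = 0 whenever c^λ_i < 0, x*_i = 1 whenever c^λ_i > 0, and Σ_{i∈K̄_j} x*_i = 1 for all j ∈ {1,…,m}. Then ⟨c, x*⟩ ≥ ⟨c, x⟩ for every x ∈ C, i.e. x* is an optimal solution of the clique cover LP relaxation. If additionally x* ∈ {0,1}^{n+m}, then ⟨c, x*⟩ ≥ ⟨c, x⟩ for every x ∈ C ∩ {0,1}^{n+m}, i.e. x* is optimal for the non-relaxed integer problem. -/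
/-- in the clique cover instance setting, if `x*` lies in the box,
takes value 0 (resp. 1) on coordinates with negative (resp. positive) reduced
cost and satisfies all clique constraints with equality, then it is optimal for
the clique cover LP relaxation; if moreover it is binary, it is optimal for the
integer problem. -/
theorem stmt_3 (n m : ℕ) (hn : 0 < n) (hm : 0 < m)
    (K : Fin m → Finset (Fin (n + m)))
    (hKsmall : ∀ j, ∀ i ∈ K j, (i : ℕ) < n)
    (Kbar : Fin m → Finset (Fin (n + m)))
    (hKbar : ∀ j, Kbar j = insert (Fin.natAdd n j) (K j))
    (c : Fin (n + m) → ℝ)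
    (hcslack : ∀ j : Fin m, c (Fin.natAdd n j) = 0)
    (lam : Fin m → ℝ)
    (clam : Fin (n + m) → ℝ)
    (hclam : ∀ i, clam i = c i - ∑ j ∈ Finset.univ.filter (fun j => i ∈ Kbar j), lam j)
    (xstar : Fin (n + m) → ℝ)
    (hbox : ∀ i, 0 ≤ xstar i ∧ xstar i ≤ 1)
    (hneg : ∀ i, clam i < 0 → xstar i = 0)
    (hposx : ∀ i, 0 < clam i → xstar i = 1)
    (hfeas : ∀ j, ∑ i ∈ Kbar j, xstar i = 1) :
    (∀ x : Fin (n + m) → ℝ, (∀ i, 0 ≤ x i ∧ x i ≤ 1) →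
        (∀ j, ∑ i ∈ Kbar j, x i = 1) → ∑ i, c i * x i ≤ ∑ i, c i * xstar i) ∧
    ((∀ i, xstar i = 0 ∨ xstar i = 1) →
      ∀ x : Fin (n + m) → ℝ, (∀ i, x i = 0 ∨ x i = 1) →
        (∀ j, ∑ i ∈ Kbar j, x i = 1) → ∑ i, c i * x i ≤ ∑ i, c i * xstar i) := by

  have key : ∀ x : Fin (n + m) → ℝ, (∀ j, ∑ i ∈ Kbar j, x i = 1) →
      ∑ i, c i * x i = ∑ i, clam i * x i + ∑ j, lam j := by
    intro x hx
    have swap : ∑ i, (∑ j ∈ Finset.univ.filter (fun j => i ∈ Kbar j), lam j) * x i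
        = ∑ j, lam j := by
      have : ∀ i : Fin (n + m),
          (∑ j ∈ Finset.univ.filter (fun j => i ∈ Kbar j), lam j) * x i
          = ∑ j : Fin m, if i ∈ Kbar j then lam j * x i else 0 := by
        intro i
        rw [Finset.sum_mul, Finset.sum_filter]
      rw [Finset.sum_congr rfl (fun i _ => this i), Finset.sum_comm]
      refine Finset.sum_congr rfl (fun j _ => ?_)
      rw [← Finset.sum_filter]
      have : Finset.univ.filter (fun i => i ∈ Kbar j) = Kbar j := by
        ext i; simp
      rw [this, ← Finset.mul_sum, hx j, mul_one]
    have : ∑ i, clam i * x i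
        = ∑ i, c i * x i - ∑ i, (∑ j ∈ Finset.univ.filter (fun j => i ∈ Kbar j), lam j) * x i := by
      rw [← Finset.sum_sub_distrib]
      refine Finset.sum_congr rfl (fun i _ => ?_)
      rw [hclam]; ring
    rw [swap] at this
    linarith
  have main : ∀ x : Fin (n + m) → ℝ, (∀ i, 0 ≤ x i ∧ x i ≤ 1) →
      (∀ j, ∑ i ∈ Kbar j, x i = 1) → ∑ i, c i * x i ≤ ∑ i, c i * xstar i := by
    intro x hb hx
    rw [key x hx, key xstar hfeas]
    have : ∑ i, clam i * x i ≤ ∑ i, clam i * xstar i := by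
      refine Finset.sum_le_sum (fun i _ => ?_)
      rcases lt_trichotomy (clam i) 0 with h | h | h
      · rw [hneg i h]
        nlinarith [(hb i).1]
      · rw [h]; simp
      · rw [hposx i h]
        nlinarith [(hb i).2]
    linarith
  refine ⟨main, fun _ x hbin hx => main x (fun i => ?_) hx⟩
  rcases hbin i with h | h <;> rw [h] <;> norm_num
end

section
/- In the clique cover instance setting, let T > 0, λ ∈ ℝ^m, j ∈ {1,…,m}, and define λ' ∈ ℝ^m by λ'_j := λ_j + T·log Σ_{i∈K̄_j} exp(c^λ_i / T) and λ'_k := λ_k for k ≠ j. Then c^{λ'}_i ≤ 0 for every i ∈ K̄_j. Consequently, if c^λ_i ≤ 0 for all i ∉ K̄_j, then c^{λ'}_i ≤ 0 for all i ∈ {1,…,n+m}, i.e. non-positivity of the reduced costs is established on the processed clique and preserved elsewhere. -/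
/-- after the log-domain dual update on clique `j0`, the reduced
costs on `K̄_{j0}` are non-positive; and non-positivity of the reduced costs
outside `K̄_{j0}` is preserved, so all reduced costs become non-positive. -/
theorem stmt_8 (n m : ℕ) (hn : 0 < n) (hm : 0 < m)
    (K : Fin m → Finset (Fin (n + m)))
    (hKsmall : ∀ j, ∀ i ∈ K j, (i : ℕ) < n)
    (Kbar : Fin m → Finset (Fin (n + m)))
    (hKbar : ∀ j, Kbar j = insert (Fin.natAdd n j) (K j))
    (c : Fin (n + m) → ℝ)
    (hcslack : ∀ j : Fin m, c (Fin.natAdd n j) = 0)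
    (T : ℝ) (hT : 0 < T) (j0 : Fin m)
    (lam lam' : Fin m → ℝ)
    (clam clam' : Fin (n + m) → ℝ)
    (hclam : ∀ i, clam i = c i - ∑ j ∈ Finset.univ.filter (fun j => i ∈ Kbar j), lam j)
    (hclam' : ∀ i, clam' i = c i - ∑ j ∈ Finset.univ.filter (fun j => i ∈ Kbar j), lam' j)
    (hlam'j : lam' j0 = lam j0 + T * Real.log (∑ i ∈ Kbar j0, Real.exp (clam i / T)))
    (hlam'k : ∀ k, k ≠ j0 → lam' k = lam k) :
    (∀ i ∈ Kbar j0, clam' i ≤ 0) ∧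
    ((∀ i ∉ Kbar j0, clam i ≤ 0) → ∀ i, clam' i ≤ 0) := by
  set S := ∑ i ∈ Kbar j0, Real.exp (clam i / T) with hS
  have hSpos : 0 < S := by
    refine Finset.sum_pos (fun i _ => Real.exp_pos _) ?_
    exact ⟨Fin.natAdd n j0, by rw [hKbar]; exact Finset.mem_insert_self _ _⟩
  have hdiff : ∀ i, clam' i =
      clam i - (if i ∈ Kbar j0 then T * Real.log S else 0) := by
    intro i
    rw [hclam, hclam']
    have h1 : ∑ j ∈ Finset.univ.filter (fun j => i ∈ Kbar j), lam' j
        = ∑ j ∈ Finset.univ.filter (fun j => i ∈ Kbar j), lam j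
          + ∑ j ∈ Finset.univ.filter (fun j => i ∈ Kbar j), (lam' j - lam j) := by
      rw [← Finset.sum_add_distrib]; apply Finset.sum_congr rfl; intros; ring
    have h2 : ∑ j ∈ Finset.univ.filter (fun j => i ∈ Kbar j), (lam' j - lam j)
        = if i ∈ Kbar j0 then T * Real.log S else 0 := by
      by_cases hi : i ∈ Kbar j0
      · rw [if_pos hi]
        rw [Finset.sum_eq_single_of_mem j0 (by simp [hi])
          (fun b _ hb => by rw [hlam'k b hb]; ring)]
        rw [hlam'j]; ring
      · rw [if_neg hi]
        apply Finset.sum_eq_zero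
        intro j hj
        have hji : i ∈ Kbar j := (Finset.mem_filter.mp hj).2
        have : j ≠ j0 := fun h => hi (h ▸ hji)
        rw [hlam'k j this]; ring
    rw [h1, h2]; ring
  have hmain : ∀ i ∈ Kbar j0, clam' i ≤ 0 := by
    intro i hi
    rw [hdiff i, if_pos hi, sub_nonpos]
    have hle : Real.exp (clam i / T) ≤ S :=
      Finset.single_le_sum (f := fun k => Real.exp (clam k / T)) (fun k _ => (Real.exp_pos _).le) hi
    have := Real.log_le_log (Real.exp_pos _) hle
    rw [Real.log_exp] at this
    calc clam i = T * (clam i / T) := by field_simp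
      _ ≤ T * Real.log S := by nlinarith
  refine ⟨hmain, fun hout i => ?_⟩
  by_cases hi : i ∈ Kbar j0
  · exact hmain i hi
  · rw [hdiff i, if_neg hi, sub_zero]; exact hout i hi
end

section
/- In the clique cover instance setting, assume every index i ∈ {1,…,n} belongs to at least one clique K_j. Given x ∈ ℝ^{n+m} with x_i ≥ 0 for all i, define the truncation projection P(x) = x̂ as follows: initialize x̂_i := 0 for i ∈ {1,…,n} and x̂_{n+j} := 1 for j ∈ {1,…,m}; then for i = 1, 2, …, n in order, set M := min_{j∈J_i} x̂_{n+j}, set x̂_i := min(x_i, M), and for each j ∈ J_i replace x̂_{n+j} by x̂_{n+j} − x̂_i. Then the resulting vector x̂ satisfies x̂ ∈ [0,1]^{n+m} and Σ_{i∈K̄_j} x̂_i = 1 for every j ∈ {1,…,m}; moreover this feasibility invariant holds at the end of every iteration of the loop over i. -/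
/-- the truncation projection produces a feasible point of the
clique cover polytope, and feasibility holds at the end of every iteration of
the loop. `xh k` is the state of `x̂` after processing the nodes `0,…,k-1`. -/
theorem stmt_13 (n m : ℕ) (hn : 0 < n) (hm : 0 < m)
    (K : Fin m → Finset (Fin (n + m)))
    (hKsmall : ∀ j, ∀ i ∈ K j, (i : ℕ) < n)
    (Kbar : Fin m → Finset (Fin (n + m)))
    (hKbar : ∀ j, Kbar j = insert (Fin.natAdd n j) (K j))
    (hJne : ∀ i : Fin (n + m), (i : ℕ) < n →
      (Finset.univ.filter (fun j => i ∈ Kbar j)).Nonempty)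
    (x : Fin (n + m) → ℝ) (hxpos : ∀ i, 0 ≤ x i)
    (xh : ℕ → Fin (n + m) → ℝ)
    (h0 : ∀ i : Fin (n + m), xh 0 i = if (i : ℕ) < n then 0 else 1)
    (hstep1 : ∀ (k : ℕ) (hk : k < n) (ik : Fin (n + m)) (hik : (ik : ℕ) = k),
      ∀ i : Fin (n + m), (i : ℕ) < n →
        xh (k + 1) i =
          if i = ik then
            min (x ik)
              ((Finset.univ.filter (fun j => ik ∈ Kbar j)).inf'
                (hJne ik (by rw [hik]; exact hk))
                (fun j => xh k (Fin.natAdd n j)))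
          else xh k i)
    (hstep2 : ∀ (k : ℕ) (hk : k < n) (ik : Fin (n + m)) (hik : (ik : ℕ) = k),
      ∀ j : Fin m,
        xh (k + 1) (Fin.natAdd n j) =
          if ik ∈ Kbar j then
            xh k (Fin.natAdd n j) -
              min (x ik)
                ((Finset.univ.filter (fun j' => ik ∈ Kbar j')).inf'
                  (hJne ik (by rw [hik]; exact hk))
                  (fun j' => xh k (Fin.natAdd n j')))
          else xh k (Fin.natAdd n j)) :
    ∀ k : ℕ, k ≤ n →
      (∀ i, 0 ≤ xh k i ∧ xh k i ≤ 1) ∧ (∀ j, ∑ i ∈ Kbar j, xh k i = 1) := by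

  suffices H : ∀ k : ℕ, k ≤ n →
      (((∀ i, 0 ≤ xh k i ∧ xh k i ≤ 1) ∧ (∀ j, ∑ i ∈ Kbar j, xh k i = 1)) ∧
        (∀ i : Fin (n + m), k ≤ (i : ℕ) → (i : ℕ) < n → xh k i = 0)) by
    exact fun k hk => (H k hk).1
  intro k
  induction k with
  | zero =>
    intro _
    have hnotmem : ∀ j : Fin m, Fin.natAdd n j ∉ K j := by
      intro j hj
      have := hKsmall j _ hj
      simp [Fin.natAdd] at this
    refine ⟨⟨fun i => ?_, fun j => ?_⟩, fun i h1 h2 => by rw [h0 i]; simp [h2]⟩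
    · rw [h0 i]; split <;> norm_num
    · rw [hKbar j, Finset.sum_insert (hnotmem j)]
      have h1 : xh 0 (Fin.natAdd n j) = 1 := by
        rw [h0]; simp [Fin.natAdd]
      have h2 : ∑ i ∈ K j, xh 0 i = 0 := by
        apply Finset.sum_eq_zero
        intro i hi
        rw [h0]; simp [hKsmall j i hi]
      rw [h1, h2]; ring
  | succ k ih =>
    intro hk1
    have hk : k < n := by omega
    have ih' := ih (by omega)
    obtain ⟨⟨ihb, ihs⟩, ihz⟩ := ih'
    set ik : Fin (n + m) := ⟨k, by omega⟩ with hikdef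
    have hik : (ik : ℕ) = k := rfl
    set J : Finset (Fin m) := Finset.univ.filter (fun j => ik ∈ Kbar j) with hJdef
    have hJ : J.Nonempty := hJne ik (by rw [hik]; exact hk)
    set M : ℝ := J.inf' hJ (fun j => xh k (Fin.natAdd n j)) with hMdef
    set v : ℝ := min (x ik) M with hvdef
    have hM0 : 0 ≤ M := by
      apply Finset.le_inf'
      intro j _
      exact (ihb (Fin.natAdd n j)).1
    have hv0 : 0 ≤ v := le_min (hxpos ik) hM0
    have hMj : ∀ j : Fin m, ik ∈ Kbar j → M ≤ xh k (Fin.natAdd n j) := by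
      intro j hj
      exact Finset.inf'_le _ (by simp [hJdef, hj])
    have hv1 : v ≤ 1 := by
      obtain ⟨j, hj⟩ := hJ
      have hj' : ik ∈ Kbar j := by simpa [hJdef] using hj
      calc v ≤ M := min_le_right _ _
        _ ≤ xh k (Fin.natAdd n j) := hMj j hj'
        _ ≤ 1 := (ihb _).2
    have hs1 : ∀ i : Fin (n + m), (i : ℕ) < n →
        xh (k + 1) i = if i = ik then v else xh k i := hstep1 k hk ik hik
    have hs2 : ∀ j : Fin m, xh (k + 1) (Fin.natAdd n j) =
        if ik ∈ Kbar j then xh k (Fin.natAdd n j) - v else xh k (Fin.natAdd n j) :=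
      hstep2 k hk ik hik
    have hzk : xh k ik = 0 := ihz ik (by rw [hik]) (by rw [hik]; exact hk)
    have hnotmem : ∀ j : Fin m, Fin.natAdd n j ∉ K j := by
      intro j hj
      have := hKsmall j _ hj
      simp [Fin.natAdd] at this
    have hikne : ∀ j : Fin m, ik ≠ Fin.natAdd n j := by
      intro j h
      have : (ik : ℕ) = ((Fin.natAdd n j : Fin (n + m)) : ℕ) := by rw [h]
      simp [Fin.natAdd, hik] at this
      omega
    refine ⟨⟨fun i => ?_, fun j => ?_⟩, fun i h1 h2 => ?_⟩
    · by_cases hi : (i : ℕ) < n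
      · rw [hs1 i hi]
        split
        · exact ⟨hv0, hv1⟩
        · exact ihb i
      · set j : Fin m := ⟨(i : ℕ) - n, by omega⟩ with hjdef
        have hij : i = Fin.natAdd n j := by
          apply Fin.ext
          simp [Fin.natAdd, hjdef]
          omega
        rw [hij, hs2 j]
        split_ifs with hcase
        · constructor
          · have := hMj j hcase
            have := min_le_right (x ik) M
            linarith
          · have := (ihb (Fin.natAdd n j)).2
            linarith
        · exact ihb (Fin.natAdd n j)
    · rw [hKbar j, Finset.sum_insert (hnotmem j)]
      have hsum : ∑ i ∈ K j, xh (k + 1) i =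
          ∑ i ∈ K j, Function.update (xh k) ik v i := by
        apply Finset.sum_congr rfl
        intro i hi
        rw [hs1 i (hKsmall j i hi), Function.update]
        simp only [eq_rec_constant, dite_eq_ite]
      have hold : xh k (Fin.natAdd n j) + ∑ i ∈ K j, xh k i = 1 := by
        have := ihs j
        rwa [hKbar j, Finset.sum_insert (hnotmem j)] at this
      by_cases hcase : ik ∈ Kbar j
      · have hikK : ik ∈ K j := by
          have := hcase
          rw [hKbar j, Finset.mem_insert] at this
          rcases this with h | h
          · exact absurd h (hikne j)
          · exact h
        rw [hs2 j, if_pos hcase, hsum, Finset.sum_update_of_mem hikK]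
        have herase : ∑ i ∈ K j, xh k i =
            xh k ik + ∑ i ∈ K j \ {ik}, xh k i := by
          rw [Finset.sdiff_singleton_eq_erase]
          exact (Finset.add_sum_erase _ _ hikK).symm
        rw [herase, hzk] at hold
        linarith
      · have hikK : ik ∉ K j := by
          intro h
          apply hcase
          rw [hKbar j]
          exact Finset.mem_insert_of_mem h
        rw [hs2 j, if_neg hcase, hsum, Finset.sum_update_of_notMem hikK]
        exact hold
    · have hne : i ≠ ik := by
        intro h
        rw [h, hik] at h1
        omega
      rw [hs1 i h2, if_neg hne]
      exact ihz i (by omega) h2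
end

section
/- In the clique cover instance setting with the truncation projection P defined as follows — initialize x̂_i := 0 for i ∈ {1,…,n} and x̂_{n+j} := 1 for j ∈ {1,…,m}; then for i = 1,…,n in order set M := min_{j∈J_i} x̂_{n+j}, x̂_i := min(x_i, M), and subtract x̂_i from x̂_{n+j} for each j ∈ J_i; output P(x) := x̂ — the map P is idempotent on the feasible set: if x ∈ C, then P(x) = x. -/
/-- the truncation projection is idempotent on the feasible set:
if the input `x` is feasible then the output `x̂ = xh n` equals `x`. -/
theorem stmt_14 (n m : ℕ) (hn : 0 < n) (hm : 0 < m)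
    (K : Fin m → Finset (Fin (n + m)))
    (hKsmall : ∀ j, ∀ i ∈ K j, (i : ℕ) < n)
    (Kbar : Fin m → Finset (Fin (n + m)))
    (hKbar : ∀ j, Kbar j = insert (Fin.natAdd n j) (K j))
    (hJne : ∀ i : Fin (n + m), (i : ℕ) < n →
      (Finset.univ.filter (fun j => i ∈ Kbar j)).Nonempty)
    (x : Fin (n + m) → ℝ)
    (hxbox : ∀ i, 0 ≤ x i ∧ x i ≤ 1)
    (hxfeas : ∀ j, ∑ i ∈ Kbar j, x i = 1)
    (xh : ℕ → Fin (n + m) → ℝ)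
    (h0 : ∀ i : Fin (n + m), xh 0 i = if (i : ℕ) < n then 0 else 1)
    (hstep1 : ∀ (k : ℕ) (hk : k < n) (ik : Fin (n + m)) (hik : (ik : ℕ) = k),
      ∀ i : Fin (n + m), (i : ℕ) < n →
        xh (k + 1) i =
          if i = ik then
            min (x ik)
              ((Finset.univ.filter (fun j => ik ∈ Kbar j)).inf'
                (hJne ik (by rw [hik]; exact hk))
                (fun j => xh k (Fin.natAdd n j)))
          else xh k i)
    (hstep2 : ∀ (k : ℕ) (hk : k < n) (ik : Fin (n + m)) (hik : (ik : ℕ) = k),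
      ∀ j : Fin m,
        xh (k + 1) (Fin.natAdd n j) =
          if ik ∈ Kbar j then
            xh k (Fin.natAdd n j) -
              min (x ik)
                ((Finset.univ.filter (fun j' => ik ∈ Kbar j')).inf'
                  (hJne ik (by rw [hik]; exact hk))
                  (fun j' => xh k (Fin.natAdd n j')))
          else xh k (Fin.natAdd n j)) :
    ∀ i, xh n i = x i := by
  have key : ∀ k, k ≤ n →
      (∀ i : Fin (n + m), (i : ℕ) < k → xh k i = x i) ∧
      (∀ j : Fin m, xh k (Fin.natAdd n j)
        = ∑ i ∈ (Kbar j).filter (fun i => k ≤ i.val), x i) := by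
    intro k
    induction k with
    | zero =>
      intro _
      refine ⟨fun i hi => absurd hi (by omega), fun j => ?_⟩
      have hf : (Kbar j).filter (fun i => 0 ≤ i.val) = Kbar j := by
        simp
      rw [hf, hxfeas j, h0]
      simp [Fin.natAdd]
    | succ k ih =>
      intro hk
      have hk' : k < n := by omega
      obtain ⟨ihA, ihC⟩ := ih (le_of_lt hk')
      set ik : Fin (n + m) := ⟨k, by omega⟩ with hikdef
      have hikv : (ik : ℕ) = k := rfl
      have hmin : min (x ik) ((Finset.univ.filter (fun j => ik ∈ Kbar j)).inf'
          (hJne ik (by rw [hikv]; exact hk')) (fun j => xh k (Fin.natAdd n j))) = x ik := by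
        apply min_eq_left
        apply Finset.le_inf'
        intro j hj
        rw [Finset.mem_filter] at hj
        rw [ihC j]
        have hmem : ik ∈ (Kbar j).filter (fun i => k ≤ i.val) := by
          simp [hj.2, hikv]
        exact Finset.single_le_sum (fun i _ => (hxbox i).1) hmem
      constructor
      · intro i hi
        rcases Nat.lt_or_ge (i : ℕ) k with h | h
        · rw [hstep1 k hk' ik hikv i (by omega), if_neg, ihA i h]
          intro he
          rw [he] at h
          omega
        · have hieq : i = ik := Fin.ext (by omega)
          rw [hieq, hstep1 k hk' ik hikv ik (by rw [hikv]; exact hk'), if_pos rfl]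
          exact hmin
      · intro j
        rw [hstep2 k hk' ik hikv j]
        by_cases hmem : ik ∈ Kbar j
        · rw [if_pos hmem, hmin, ihC j]
          have hsplit : (Kbar j).filter (fun i => k ≤ i.val)
              = insert ik ((Kbar j).filter (fun i => k + 1 ≤ i.val)) := by
            ext a
            simp only [Finset.mem_filter, Finset.mem_insert]
            constructor
            · rintro ⟨ha, hka⟩
              rcases Nat.eq_or_lt_of_le hka with h | h
              · left; exact Fin.ext (by omega)
              · right; exact ⟨ha, h⟩
            · rintro (rfl | ⟨ha, hka⟩)
              · exact ⟨hmem, le_refl _⟩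
              · exact ⟨ha, by omega⟩
          rw [hsplit, Finset.sum_insert (by simp [hikv])]
          ring
        · rw [if_neg hmem, ihC j]
          congr 1
          ext a
          simp only [Finset.mem_filter]
          constructor
          · rintro ⟨ha, hka⟩
            refine ⟨ha, ?_⟩
            rcases Nat.eq_or_lt_of_le hka with h | h
            · exact absurd ((Fin.ext (by omega) : a = ik) ▸ ha) hmem
            · exact h
          · rintro ⟨ha, hka⟩
            exact ⟨ha, by omega⟩
  obtain ⟨hA, hC⟩ := key n le_rfl
  intro i
  rcases Nat.lt_or_ge (i : ℕ) n with h | h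
  · exact hA i h
  · set j : Fin m := ⟨(i : ℕ) - n, by omega⟩ with hjdef
    have hi : i = Fin.natAdd n j := Fin.ext (by simp [Fin.natAdd, hjdef]; omega)
    rw [hi, hC j]
    have hf : (Kbar j).filter (fun a => n ≤ a.val) = {Fin.natAdd n j} := by
      ext a
      simp only [Finset.mem_filter, Finset.mem_singleton, hKbar, Finset.mem_insert]
      constructor
      · rintro ⟨rfl | ha, hna⟩
        · rfl
        · exact absurd (hKsmall j a ha) (by omega)
      · rintro rfl
        exact ⟨Or.inl rfl, by simp [Fin.natAdd]⟩
    rw [hf, Finset.sum_singleton]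
end

section
/- In the clique cover instance setting with the truncation projection P defined as follows — initialize x̂_i := 0 for i ∈ {1,…,n} and x̂_{n+j} := 1 for j ∈ {1,…,m}; then for i = 1,…,n in order set M := min_{j∈J_i} x̂_{n+j}, x̂_i := min(x_i, M), and subtract x̂_i from x̂_{n+j} for each j ∈ J_i; output P(x) := x̂ — let ε ≥ 0 and let x ∈ ℝ^{n+m} with x_i ≥ 0 for all i satisfy |Σ_{i∈K̄_j} x_i − 1| ≤ ε for every j ∈ {1,…,m}. Then |x_i − P(x)_i| ≤ ε for every i ∈ {1,…,n}. -/
/-- if all clique constraints are `ε`-satisfied by `x ≥ 0`, then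
the truncation projection changes each non-slack coordinate by at most `ε`. -/
theorem stmt_15 (n m : ℕ) (hn : 0 < n) (hm : 0 < m)
    (K : Fin m → Finset (Fin (n + m)))
    (hKsmall : ∀ j, ∀ i ∈ K j, (i : ℕ) < n)
    (Kbar : Fin m → Finset (Fin (n + m)))
    (hKbar : ∀ j, Kbar j = insert (Fin.natAdd n j) (K j))
    (hJne : ∀ i : Fin (n + m), (i : ℕ) < n →
      (Finset.univ.filter (fun j => i ∈ Kbar j)).Nonempty)
    (eps : ℝ) (heps : 0 ≤ eps)
    (x : Fin (n + m) → ℝ) (hxpos : ∀ i, 0 ≤ x i)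
    (hnear : ∀ j, |(∑ i ∈ Kbar j, x i) - 1| ≤ eps)
    (xh : ℕ → Fin (n + m) → ℝ)
    (h0 : ∀ i : Fin (n + m), xh 0 i = if (i : ℕ) < n then 0 else 1)
    (hstep1 : ∀ (k : ℕ) (hk : k < n) (ik : Fin (n + m)) (hik : (ik : ℕ) = k),
      ∀ i : Fin (n + m), (i : ℕ) < n →
        xh (k + 1) i =
          if i = ik then
            min (x ik)
              ((Finset.univ.filter (fun j => ik ∈ Kbar j)).inf'
                (hJne ik (by rw [hik]; exact hk))
                (fun j => xh k (Fin.natAdd n j)))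
          else xh k i)
    (hstep2 : ∀ (k : ℕ) (hk : k < n) (ik : Fin (n + m)) (hik : (ik : ℕ) = k),
      ∀ j : Fin m,
        xh (k + 1) (Fin.natAdd n j) =
          if ik ∈ Kbar j then
            xh k (Fin.natAdd n j) -
              min (x ik)
                ((Finset.univ.filter (fun j' => ik ∈ Kbar j')).inf'
                  (hJne ik (by rw [hik]; exact hk))
                  (fun j' => xh k (Fin.natAdd n j')))
          else xh k (Fin.natAdd n j)) :
    ∀ i : Fin (n + m), (i : ℕ) < n → |x i - xh n i| ≤ eps := by
  -- values of non-slack coordinates stabilize once set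
  have stab : ∀ k, k ≤ n → ∀ i : Fin (n + m), (i : ℕ) < k → xh k i = xh ((i : ℕ) + 1) i := by
    intro k
    induction k with
    | zero => intro _ i hi; omega
    | succ k ih =>
      intro hk i hi
      have hkn : k < n := by omega
      rcases Nat.lt_succ_iff_lt_or_eq.mp hi with h | h
      · have hs := hstep1 k hkn ⟨k, by omega⟩ rfl i (by omega)
        rw [hs, if_neg, ih (by omega) i h]
        intro he
        have : (i : ℕ) = k := by rw [he]
        omega
      · rw [h]
  -- the value of each non-slack coordinate at the end
  have hxhn : ∀ i : Fin (n + m), ∀ hi : (i : ℕ) < n,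
      xh n i = min (x i)
        ((Finset.univ.filter (fun j => i ∈ Kbar j)).inf' (hJne i hi)
          (fun j => xh (i : ℕ) (Fin.natAdd n j))) := by
    intro i hi
    rw [stab n le_rfl i hi]
    have hs := hstep1 (i : ℕ) hi i rfl i hi
    rwa [if_pos rfl] at hs
  have hle : ∀ i : Fin (n + m), (i : ℕ) < n → xh n i ≤ x i := by
    intro i hi
    rw [hxhn i hi]
    exact min_le_left _ _
  -- the invariant for slack variables
  have inv : ∀ k, k ≤ n → ∀ j : Fin m,
      xh k (Fin.natAdd n j) =
        1 - ∑ i ∈ (K j).filter (fun i => i.val < k), xh n i := by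
    intro k
    induction k with
    | zero =>
      intro _ j
      have hfe : (K j).filter (fun i => i.val < 0) = ∅ := by simp
      rw [hfe, Finset.sum_empty, h0]
      have : ¬ ((Fin.natAdd n j : ℕ) < n) := by
        rw [Fin.coe_natAdd]; omega
      rw [if_neg this]
      ring
    | succ k ih =>
      intro hk j
      have hkn : k < n := by omega
      set ik : Fin (n + m) := ⟨k, by omega⟩ with hikdef
      have hikval : (ik : ℕ) = k := rfl
      have hikn : (ik : ℕ) < n := hkn
      have hs2 : xh (k + 1) (Fin.natAdd n j) =
          if ik ∈ Kbar j then
            xh (ik : ℕ) (Fin.natAdd n j) -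
              min (x ik)
                ((Finset.univ.filter (fun j' => ik ∈ Kbar j')).inf' (hJne ik hikn)
                  (fun j' => xh (ik : ℕ) (Fin.natAdd n j')))
          else xh (ik : ℕ) (Fin.natAdd n j) := hstep2 k hkn ik rfl j
      rw [hs2]
      by_cases hmem : ik ∈ Kbar j
      · rw [if_pos hmem, ← hxhn ik hikn]
        have hK : ik ∈ K j := by
          rw [hKbar] at hmem
          rcases Finset.mem_insert.mp hmem with h | h
          · exfalso
            have := congrArg Fin.val h
            rw [Fin.coe_natAdd] at this
            omega
          · exact h
        have hnot : ik ∉ (K j).filter (fun i => i.val < k) := by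
          simp [Finset.mem_filter, hikval]
        have hfe : (K j).filter (fun i => i.val < k + 1) =
            insert ik ((K j).filter (fun i => i.val < k)) := by
          ext i
          simp only [Finset.mem_filter, Finset.mem_insert]
          constructor
          · rintro ⟨hiK, hik1⟩
            rcases Nat.lt_succ_iff_lt_or_eq.mp hik1 with h | h
            · exact Or.inr ⟨hiK, h⟩
            · exact Or.inl (Fin.ext h)
          · rintro (rfl | ⟨hiK, hlt⟩)
            · exact ⟨hK, Nat.lt_succ_self k⟩
            · exact ⟨hiK, Nat.lt_succ_of_lt hlt⟩
        rw [hfe, Finset.sum_insert hnot, ih (by omega) j]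
        ring
      · rw [if_neg hmem]
        have hKn : ik ∉ K j := fun h => hmem (by
          rw [hKbar]; exact Finset.mem_insert_of_mem h)
        have hfe : (K j).filter (fun i => i.val < k + 1) =
            (K j).filter (fun i => i.val < k) := by
          ext i
          simp only [Finset.mem_filter]
          constructor
          · rintro ⟨hiK, hik1⟩
            refine ⟨hiK, ?_⟩
            rcases Nat.lt_succ_iff_lt_or_eq.mp hik1 with h | h
            · exact h
            · exfalso
              have hieq : i = ik := Fin.ext (by rw [h, hikval])
              exact hKn (hieq ▸ hiK)
          · rintro ⟨hiK, hlt⟩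
            exact ⟨hiK, Nat.lt_succ_of_lt hlt⟩
        rw [hfe]
        exact ih (by omega) j
  -- main argument
  intro i hi
  rw [hxhn i hi]
  have hMlb : x i - eps ≤
      (Finset.univ.filter (fun j => i ∈ Kbar j)).inf' (hJne i hi)
        (fun j => xh (i : ℕ) (Fin.natAdd n j)) := by
    apply Finset.le_inf'
    intro j hj
    have hiKbar : i ∈ Kbar j := (Finset.mem_filter.mp hj).2
    have hiK : i ∈ K j := by
      rw [hKbar] at hiKbar
      rcases Finset.mem_insert.mp hiKbar with h | h
      · exfalso
        have := congrArg Fin.val h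
        rw [Fin.coe_natAdd] at this
        omega
      · exact h
    rw [inv (i : ℕ) hi.le j]
    have hsum1 : ∑ i' ∈ (K j).filter (fun i' => i'.val < (i : ℕ)), xh n i' ≤
        ∑ i' ∈ (K j).filter (fun i' => i'.val < (i : ℕ)), x i' := by
      apply Finset.sum_le_sum
      intro i' hi'
      exact hle i' (hKsmall j i' (Finset.mem_filter.mp hi').1)
    have hnoti : i ∉ (K j).filter (fun i' => i'.val < (i : ℕ)) := by
      simp [Finset.mem_filter]
    have hsub : insert i ((K j).filter (fun i' => i'.val < (i : ℕ))) ⊆ Kbar j := by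
      intro a ha
      rcases Finset.mem_insert.mp ha with rfl | ha
      · exact hiKbar
      · rw [hKbar]
        exact Finset.mem_insert_of_mem (Finset.mem_filter.mp ha).1
    have hsum2 : x i + ∑ i' ∈ (K j).filter (fun i' => i'.val < (i : ℕ)), x i' ≤
        ∑ i' ∈ Kbar j, x i' := by
      rw [← Finset.sum_insert hnoti]
      exact Finset.sum_le_sum_of_subset_of_nonneg hsub (fun a _ _ => hxpos a)
    have hub : ∑ i' ∈ Kbar j, x i' ≤ 1 + eps := by
      linarith [(abs_le.mp (hnear j)).2]
    linarith
  have h1 : min (x i)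
      ((Finset.univ.filter (fun j => i ∈ Kbar j)).inf' (hJne i hi)
        (fun j => xh (i : ℕ) (Fin.natAdd n j))) ≤ x i := min_le_left _ _
  have h2 : x i - eps ≤ min (x i)
      ((Finset.univ.filter (fun j => i ∈ Kbar j)).inf' (hJne i hi)
        (fun j => xh (i : ℕ) (Fin.natAdd n j))) := le_min (by linarith) hMlb
  rw [abs_le]
  constructor <;> linarith
end

section
/- In the clique cover instance setting, the truncation projection P : { x ∈ ℝ^{n+m} : x ≥ 0 } → C — defined by: initialize x̂_i := 0 for i ∈ {1,…,n} and x̂_{n+j} := 1 for j ∈ {1,…,m}; then for i = 1,…,n in order set M := min_{j∈J_i} x̂_{n+j}, x̂_i := min(x_i, M), and subtract x̂_i from x̂_{n+j} for each j ∈ J_i; output P(x) := x̂ — is a continuous map. Together with its idempotence on C, this makes P a projection onto the feasible set C. -/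
/-!
Each state of the algorithm is built from the previous one and the input by `min`, finite
infima and subtraction, so by induction the output depends continuously on the input.

Processing node `k`, which still holds `0`, sets it to some `t` and lowers by `t` the slack of
every clique containing it, so every clique sum stays `1`; as `t` is at most each of these
slacks, all coordinates stay non-negative, hence at most `1`.

For `x ∈ C`, just before node `k` is processed the slack of a clique `j ∋ k` equals
`x (n + j) + ∑_{i ∈ K j, i ≥ k} x i ≥ x k`, so the truncation never bites: every node receives
its value from `x`, and the clique sums then force the slacks to agree with `x` as well.
-/

open Finset

namespace CliqueCover

variable {n m : ℕ}

theorem sum_insert_slack {K Kbar : Fin m → Finset (Fin (n + m))}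
    (hK : ∀ j, ∀ i ∈ K j, (i : ℕ) < n) (hKbar : ∀ j, Kbar j = insert (Fin.natAdd n j) (K j))
    (j : Fin m) (z : Fin (n + m) → ℝ) :
    ∑ i ∈ Kbar j, z i = z (Fin.natAdd n j) + ∑ i ∈ K j, z i := by
  rw [hKbar, sum_insert fun h => by simpa using hK j _ h]

structure IsTruncStep (Kbar : Fin m → Finset (Fin (n + m))) (k : Fin (n + m)) (t : ℝ)
    (y y' : Fin (n + m) → ℝ) : Prop where
  node : ∀ i : Fin (n + m), (i : ℕ) < n → y' i = if i = k then t else y i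
  slack : ∀ j, y' (Fin.natAdd n j) =
    if k ∈ Kbar j then y (Fin.natAdd n j) - t else y (Fin.natAdd n j)

theorem IsTruncStep.sum_eq {K Kbar : Fin m → Finset (Fin (n + m))}
    (hK : ∀ j, ∀ i ∈ K j, (i : ℕ) < n) (hKbar : ∀ j, Kbar j = insert (Fin.natAdd n j) (K j))
    {k : Fin (n + m)} {t : ℝ} {y y' : Fin (n + m) → ℝ} (h : IsTruncStep Kbar k t y y')
    (hk : (k : ℕ) < n) (hyk : y k = 0) (j : Fin m) :
    ∑ i ∈ Kbar j, y' i = ∑ i ∈ Kbar j, y i := by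
  have hmem : k ∈ Kbar j ↔ k ∈ K j := by
    rw [hKbar, mem_insert, or_iff_right]
    exact fun h => by simp [h] at hk
  have hnodes : ∑ i ∈ K j, y' i = ∑ i ∈ K j, y i + if k ∈ K j then t else 0 := by
    rw [← sum_ite_eq' (K j) k fun _ => t, ← sum_add_distrib]
    refine sum_congr rfl fun i hi => ?_
    rw [h.node i (hK j i hi)]
    split_ifs with hik <;> simp [hik, hyk]
  rw [sum_insert_slack hK hKbar, sum_insert_slack hK hKbar, hnodes, h.slack]
  simp only [hmem]
  split_ifs <;> ring

theorem le_slack_of_sum_eq_one {K Kbar : Fin m → Finset (Fin (n + m))}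
    (hK : ∀ j, ∀ i ∈ K j, (i : ℕ) < n) (hKbar : ∀ j, Kbar j = insert (Fin.natAdd n j) (K j))
    {x z : Fin (n + m) → ℝ} (hx : ∀ i, 0 ≤ x i) {j : Fin m} (hxj : ∑ i ∈ Kbar j, x i = 1)
    (hzj : ∑ i ∈ Kbar j, z i = 1) {k : Fin (n + m)} (hkj : k ∈ K j)
    (hz : ∀ i ∈ K j, z i = if (i : ℕ) < k then x i else 0) :
    x k ≤ z (Fin.natAdd n j) := by
  have hrest : x k ≤ ∑ i ∈ K j, if (i : ℕ) < k then 0 else x i := by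
    simpa using single_le_sum (f := fun i : Fin (n + m) => if (i : ℕ) < k then 0 else x i)
      (fun i _ => by split_ifs; exacts [le_rfl, hx i]) hkj
  have hzK : ∑ i ∈ K j, z i = ∑ i ∈ K j, x i - ∑ i ∈ K j, if (i : ℕ) < k then 0 else x i := by
    rw [← sum_sub_distrib]
    exact sum_congr rfl fun i hi => by rw [hz i hi]; split_ifs <;> ring
  rw [sum_insert_slack hK hKbar] at hxj hzj
  linarith [hx (Fin.natAdd n j)]

variable (Kbar : Fin m → Finset (Fin (n + m)))
  (hJ : ∀ i : Fin (n + m), (i : ℕ) < n → (univ.filter fun j => i ∈ Kbar j).Nonempty)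

def truncValue (x y : Fin (n + m) → ℝ) (k : Fin (n + m)) (hk : (k : ℕ) < n) : ℝ :=
  min (x k) ((univ.filter fun j => k ∈ Kbar j).inf' (hJ k hk) fun j => y (Fin.natAdd n j))

/-- `y k` is the state of the truncation algorithm on input `x` after processing the nodes
`0, …, k - 1`. -/
structure IsTruncRun (x : Fin (n + m) → ℝ) (y : ℕ → Fin (n + m) → ℝ) : Prop where
  init : ∀ i, y 0 i = if (i : ℕ) < n then 0 else 1
  step : ∀ k (hk : k < n), IsTruncStep Kbar ⟨k, by omega⟩
    (truncValue Kbar hJ x (y k) ⟨k, by omega⟩ hk) (y k) (y (k + 1))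

variable {Kbar hJ}

theorem truncValue_le {x y : Fin (n + m) → ℝ} {k : Fin (n + m)} (hk : (k : ℕ) < n) {j : Fin m}
    (hj : k ∈ Kbar j) : truncValue Kbar hJ x y k hk ≤ y (Fin.natAdd n j) :=
  (min_le_right _ _).trans (inf'_le _ (by simpa using hj))

theorem truncValue_nonneg {x y : Fin (n + m) → ℝ} {k : Fin (n + m)} (hk : (k : ℕ) < n)
    (hx : 0 ≤ x k) (hy : ∀ j, 0 ≤ y (Fin.natAdd n j)) : 0 ≤ truncValue Kbar hJ x y k hk :=
  le_min hx (le_inf' _ _ fun j _ => hy j)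

theorem truncValue_eq_left {x y : Fin (n + m) → ℝ} {k : Fin (n + m)} (hk : (k : ℕ) < n)
    (h : ∀ j, k ∈ Kbar j → x k ≤ y (Fin.natAdd n j)) : truncValue Kbar hJ x y k hk = x k :=
  min_eq_left (le_inf' _ _ fun j hj => h j (mem_filter.1 hj).2)

theorem continuous_truncValue {y : (Fin (n + m) → ℝ) → Fin (n + m) → ℝ} (hy : Continuous y)
    (k : Fin (n + m)) (hk : (k : ℕ) < n) : Continuous fun x => truncValue Kbar hJ x (y x) k hk :=
  (continuous_apply k).min
    (Continuous.finset_inf'_apply _ fun j _ => (continuous_apply (Fin.natAdd n j)).comp hy)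

namespace IsTruncRun

variable {x : Fin (n + m) → ℝ} {y : ℕ → Fin (n + m) → ℝ}

theorem apply_eq_zero (hr : IsTruncRun Kbar hJ x y) {k : ℕ} {i : Fin (n + m)} (hki : k ≤ i)
    (hin : (i : ℕ) < n) : y k i = 0 := by
  induction k with
  | zero => simp [hr.init, hin]
  | succ k ih =>
    rw [(hr.step k (by omega)).node i hin, if_neg fun h => by simp [h] at hki, ih (by omega)]

theorem sum_eq_one {K : Fin m → Finset (Fin (n + m))} (hK : ∀ j, ∀ i ∈ K j, (i : ℕ) < n)
    (hKbar : ∀ j, Kbar j = insert (Fin.natAdd n j) (K j)) (hr : IsTruncRun Kbar hJ x y)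
    {k : ℕ} (hk : k ≤ n) (j : Fin m) : ∑ i ∈ Kbar j, y k i = 1 := by
  induction k with
  | zero =>
    rw [sum_insert_slack hK hKbar, sum_eq_zero fun i hi => by simp [hr.init, hK j i hi]]
    simp [hr.init]
  | succ k ih =>
    rw [(hr.step k hk).sum_eq hK hKbar hk (hr.apply_eq_zero le_rfl hk), ih (by omega)]

theorem nonneg (hr : IsTruncRun Kbar hJ x y) (hx : ∀ i, 0 ≤ x i) {k : ℕ} (hk : k ≤ n)
    (i : Fin (n + m)) : 0 ≤ y k i := by
  induction k generalizing i with
  | zero => rw [hr.init]; split_ifs <;> norm_num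
  | succ k ih =>
    have ih := ih (by omega)
    have step := hr.step k hk
    refine Fin.addCases (fun i => ?_) (fun j => ?_) i
    · rw [step.node _ (by simp)]
      split_ifs
      exacts [truncValue_nonneg _ (hx _) fun j => ih _, ih _]
    · rw [step.slack]
      split_ifs with hj
      exacts [sub_nonneg.2 (truncValue_le _ hj), ih _]

theorem le_one {K : Fin m → Finset (Fin (n + m))} (hK : ∀ j, ∀ i ∈ K j, (i : ℕ) < n)
    (hKbar : ∀ j, Kbar j = insert (Fin.natAdd n j) (K j)) (hr : IsTruncRun Kbar hJ x y)
    (hx : ∀ i, 0 ≤ x i) {k : ℕ} (hk : k ≤ n) (i : Fin (n + m)) : y k i ≤ 1 := by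
  obtain ⟨j, hj⟩ : ∃ j, i ∈ Kbar j := by
    refine Fin.addCases (fun i => ?_) (fun j => ⟨j, by simp [hKbar]⟩) i
    obtain ⟨j, hj⟩ := hJ (Fin.castAdd m i) (by simp)
    exact ⟨j, (mem_filter.1 hj).2⟩
  calc y k i ≤ ∑ i ∈ Kbar j, y k i := single_le_sum (fun i _ => hr.nonneg hx hk i) hj
    _ = 1 := hr.sum_eq_one hK hKbar hk j

theorem apply_eq_of_mem {K : Fin m → Finset (Fin (n + m))} (hK : ∀ j, ∀ i ∈ K j, (i : ℕ) < n)
    (hKbar : ∀ j, Kbar j = insert (Fin.natAdd n j) (K j)) (hr : IsTruncRun Kbar hJ x y)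
    (hx : ∀ i, 0 ≤ x i) (hxC : ∀ j, ∑ i ∈ Kbar j, x i = 1) {k : ℕ} (hk : k ≤ n)
    {i : Fin (n + m)} (hi : (i : ℕ) < n) : y k i = if (i : ℕ) < k then x i else 0 := by
  induction k generalizing i with
  | zero => simp [hr.init, hi]
  | succ k ih =>
    have ih : ∀ {i : Fin (n + m)}, (i : ℕ) < n → y k i = if (i : ℕ) < k then x i else 0 :=
      ih (by omega)
    have hslack : ∀ j, (⟨k, by omega⟩ : Fin (n + m)) ∈ Kbar j →
        x ⟨k, by omega⟩ ≤ y k (Fin.natAdd n j) := by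
      intro j hj
      refine le_slack_of_sum_eq_one hK hKbar hx (hxC j) (hr.sum_eq_one hK hKbar (by omega) j)
        ?_ fun i hi => ih (hK j i hi)
      rw [hKbar, mem_insert] at hj
      exact hj.resolve_left fun h => by simp [Fin.ext_iff] at h; omega
    rw [(hr.step k hk).node i hi, truncValue_eq_left _ hslack]
    by_cases hik : (i : ℕ) = k
    · have hik : i = ⟨k, by omega⟩ := Fin.ext hik
      rw [if_pos hik, hik]
      simp
    · rw [if_neg fun h => hik (by simp [h]), ih hi]
      split_ifs <;> first | rfl | omega

theorem eq_of_mem {K : Fin m → Finset (Fin (n + m))} (hK : ∀ j, ∀ i ∈ K j, (i : ℕ) < n)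
    (hKbar : ∀ j, Kbar j = insert (Fin.natAdd n j) (K j)) (hr : IsTruncRun Kbar hJ x y)
    (hx : ∀ i, 0 ≤ x i) (hxC : ∀ j, ∑ i ∈ Kbar j, x i = 1) : y n = x := by
  have hnode : ∀ i : Fin (n + m), (i : ℕ) < n → y n i = x i := fun i hi => by
    rw [hr.apply_eq_of_mem hK hKbar hx hxC le_rfl hi, if_pos hi]
  funext i
  refine Fin.addCases (fun i => hnode _ (by simp)) (fun j => ?_) i
  have hy := hr.sum_eq_one hK hKbar le_rfl j
  have hxj := hxC j
  rw [sum_insert_slack hK hKbar, sum_congr rfl fun i hi => hnode i (hK j i hi)] at hy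
  rw [sum_insert_slack hK hKbar] at hxj
  linarith

end IsTruncRun

theorem continuous_of_isTruncRun {y : (Fin (n + m) → ℝ) → ℕ → Fin (n + m) → ℝ}
    (hr : ∀ x, IsTruncRun Kbar hJ x (y x)) {k : ℕ} (hk : k ≤ n) :
    Continuous fun x => y x k := by
  induction k with
  | zero =>
    have : (fun x => y x 0) = fun _ (i : Fin (n + m)) => if (i : ℕ) < n then (0 : ℝ) else 1 :=
      funext fun x => funext (hr x).init
    rw [this]
    exact continuous_const
  | succ k ih =>
    have ih := ih (by omega)
    have ht := continuous_truncValue (hJ := hJ) ih ⟨k, by omega⟩ hk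
    refine continuous_pi fun i => Fin.addCases (fun i => ?_) (fun j => ?_) i
    · have : (fun x => y x (k + 1) (Fin.castAdd m i)) = fun x =>
          if Fin.castAdd m i = ⟨k, by omega⟩ then truncValue Kbar hJ x (y x k) ⟨k, by omega⟩ hk
          else y x k (Fin.castAdd m i) :=
        funext fun x => ((hr x).step k hk).node _ (by simp)
      rw [this]
      split_ifs
      exacts [ht, (continuous_apply _).comp ih]
    · have : (fun x => y x (k + 1) (Fin.natAdd n j)) = fun x =>
          if (⟨k, by omega⟩ : Fin (n + m)) ∈ Kbar j then
            y x k (Fin.natAdd n j) - truncValue Kbar hJ x (y x k) ⟨k, by omega⟩ hk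
          else y x k (Fin.natAdd n j) :=
        funext fun x => ((hr x).step k hk).slack j
      rw [this]
      split_ifs
      exacts [((continuous_apply _).comp ih).sub ht, (continuous_apply _).comp ih]

end CliqueCover

open CliqueCover in
/-- the truncation projection, as a map from the non-negative
orthant, is continuous; together with mapping into the feasible set `C` and
being the identity on `C`, it is a projection onto `C`. Here `xh x k` is the
state of the algorithm on input `x` after processing the nodes `0,…,k-1`, and
`Pmap x = xh x n` is its output. -/
theorem stmt_16 (n m : ℕ)
    (K : Fin m → Finset (Fin (n + m)))
    (hKsmall : ∀ j, ∀ i ∈ K j, (i : ℕ) < n)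
    (Kbar : Fin m → Finset (Fin (n + m)))
    (hKbar : ∀ j, Kbar j = insert (Fin.natAdd n j) (K j))
    (hJne : ∀ i : Fin (n + m), (i : ℕ) < n →
      (Finset.univ.filter (fun j => i ∈ Kbar j)).Nonempty)
    (xh : (Fin (n + m) → ℝ) → ℕ → Fin (n + m) → ℝ)
    (h0 : ∀ (x : Fin (n + m) → ℝ) (i : Fin (n + m)),
      xh x 0 i = if (i : ℕ) < n then 0 else 1)
    (hstep1 : ∀ (x : Fin (n + m) → ℝ) (k : ℕ) (hk : k < n)
        (ik : Fin (n + m)) (hik : (ik : ℕ) = k),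
      ∀ i : Fin (n + m), (i : ℕ) < n →
        xh x (k + 1) i =
          if i = ik then
            min (x ik)
              ((Finset.univ.filter (fun j => ik ∈ Kbar j)).inf'
                (hJne ik (by rw [hik]; exact hk))
                (fun j => xh x k (Fin.natAdd n j)))
          else xh x k i)
    (hstep2 : ∀ (x : Fin (n + m) → ℝ) (k : ℕ) (hk : k < n)
        (ik : Fin (n + m)) (hik : (ik : ℕ) = k),
      ∀ j : Fin m,
        xh x (k + 1) (Fin.natAdd n j) =
          if ik ∈ Kbar j then
            xh x k (Fin.natAdd n j) -
              min (x ik)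
                ((Finset.univ.filter (fun j' => ik ∈ Kbar j')).inf'
                  (hJne ik (by rw [hik]; exact hk))
                  (fun j' => xh x k (Fin.natAdd n j')))
          else xh x k (Fin.natAdd n j))
    (Pmap : (Fin (n + m) → ℝ) → Fin (n + m) → ℝ)
    (hP : ∀ x, Pmap x = xh x n) :
    ContinuousOn Pmap {x | ∀ i, 0 ≤ x i} ∧
    (∀ x, (∀ i, 0 ≤ x i) →
      (∀ i, 0 ≤ Pmap x i ∧ Pmap x i ≤ 1) ∧ ∀ j, ∑ i ∈ Kbar j, Pmap x i = 1) ∧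
    (∀ x, (∀ i, 0 ≤ x i ∧ x i ≤ 1) → (∀ j, ∑ i ∈ Kbar j, x i = 1) → Pmap x = x) := by
  have hrun : ∀ x, IsTruncRun Kbar hJne x (xh x) := fun x =>
    ⟨h0 x, fun k hk => ⟨hstep1 x k hk _ rfl, hstep2 x k hk _ rfl⟩⟩
  obtain rfl : Pmap = fun x => xh x n := funext hP
  refine ⟨(continuous_of_isTruncRun hrun le_rfl).continuousOn, fun x hx => ⟨fun i => ?_, ?_⟩,
    fun x hx hxC => (hrun x).eq_of_mem hKsmall hKbar (fun i => (hx i).1) hxC⟩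
  · exact ⟨(hrun x).nonneg hx le_rfl i, (hrun x).le_one hKsmall hKbar hx le_rfl i⟩
  · exact (hrun x).sum_eq_one hKsmall hKbar le_rfl
end
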